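/- Let S be a commutative Poisson algebra and f_1,...,f_n Poisson central elements forming a regular sequence, generating ideal I. Then the induced Poisson module structure on I^k/I^{k+1} over S/I decomposes as a direct sum of copies of S/I indexed by monomials f_1^{m_1}···f_n^{m_n} of total degree k, and for a Poisson central element h ∈ I^k of S, each coefficient of its image in I^k/I^{k+1} with respect to this basis is Poisson central in S/I. -/

import Mathlib

/-!
`I^K` is spanned by the monomials of degree `K` in the `fᵢ`, which gives the spanning part.
Their independence modulo `I` is the quasi-regularity of a regular sequence (Matsumura,
Thm. 16.2), proved by induction on the length: the last element `g` is a nonzerodivisor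
modulo `J = (f₁, …, fₙ₋₁)`, hence, by quasi-regularity of the shorter sequence, modulo every
power of `J`; a relation of degree `K + 1` then splits into its `g`-free part, a relation for the
shorter sequence, and `g` times a relation of degree `K`.

Since the `fᵢ` are Poisson central, `{c fᵐ, s} = {c, s} fᵐ`. So `{·, s}` preserves every
`I^K`, and bracketing `h - ∑ cₘ fᵐ ∈ I^(K+1)` with `s` turns `{h, s} = 0` into a relation
of degree `K` with coefficients `{cₘ, s}`, which therefore lie in `I`.
-/

/-- A Poisson bracket on a commutative algebra `S` over `k`: a `k`-bilinear Lie bracket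
which is a derivation in each argument. -/
structure PoissonBracket (k S : Type*) [CommRing k] [CommRing S] [Algebra k S] where
  bracket : S → S → S
  add_left : ∀ a b c : S, bracket (a + b) c = bracket a c + bracket b c
  smul_left : ∀ (r : k) (a b : S), bracket (r • a) b = r • bracket a b
  antisymm : ∀ a b : S, bracket a b = - bracket b a
  jacobi : ∀ a b c : S,
    bracket a (bracket b c) + bracket b (bracket c a) + bracket c (bracket a b) = 0
  leibniz : ∀ a b c : S, bracket a (b * c) = bracket a b * c + b * bracket a c

section

open Finset

variable {S : Type*} [CommRing S] {n : ℕ}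

theorem sum_add_single (m : Fin n → ℕ) (j : Fin n) :
    ∑ i, (m + Pi.single j 1 : Fin n → ℕ) i = ∑ i, m i + 1 := by
  simp only [Pi.add_apply, sum_add_distrib, sum_pi_single', mem_univ, if_true]

theorem sub_single_add_single {m : Fin n → ℕ} {j : Fin n} (hm : m j ≠ 0) :
    m - Pi.single j 1 + Pi.single j 1 = m := by
  funext i
  rcases eq_or_ne i j with rfl | hi
  · simp only [Pi.add_apply, Pi.sub_apply, Pi.single_eq_same]
    omega
  · simp [Pi.single_eq_of_ne hi]

theorem add_single_mem_antidiagonalTuple {K : ℕ} {m : Fin n → ℕ}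
    (hm : m ∈ Nat.antidiagonalTuple n K) (j : Fin n) :
    m + Pi.single j 1 ∈ Nat.antidiagonalTuple n (K + 1) := by
  rw [Nat.mem_antidiagonalTuple, sum_add_single, Nat.mem_antidiagonalTuple.mp hm]

theorem sub_single_mem_antidiagonalTuple {K : ℕ} {m : Fin n → ℕ}
    (hm : m ∈ Nat.antidiagonalTuple n (K + 1)) {j : Fin n} (hj : m j ≠ 0) :
    m - Pi.single j 1 ∈ Nat.antidiagonalTuple n K := by
  rw [Nat.mem_antidiagonalTuple, ← sub_single_add_single hj, sum_add_single] at hm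
  exact Nat.mem_antidiagonalTuple.mpr (by omega)

theorem snoc_zero_mem_antidiagonalTuple {K : ℕ} {μ : Fin n → ℕ}
    (hμ : μ ∈ Nat.antidiagonalTuple n K) :
    (Fin.snoc μ 0 : Fin (n + 1) → ℕ) ∈ Nat.antidiagonalTuple (n + 1) K := by
  simpa [Nat.mem_antidiagonalTuple, Fin.sum_univ_castSucc] using hμ

theorem init_mem_antidiagonalTuple {K : ℕ} {m : Fin (n + 1) → ℕ}
    (hm : m ∈ Nat.antidiagonalTuple (n + 1) K) (hlast : m (Fin.last n) = 0) :
    Fin.init m ∈ Nat.antidiagonalTuple n K := by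
  simpa [Nat.mem_antidiagonalTuple, Fin.sum_univ_castSucc, hlast, Fin.init] using hm

def homogEval (f : Fin n → S) (K : ℕ) : ((Fin n → ℕ) → S) →ₗ[S] S where
  toFun c := ∑ m ∈ Nat.antidiagonalTuple n K, c m * ∏ i, f i ^ m i
  map_add' c d := by simp only [Pi.add_apply, add_mul, sum_add_distrib]
  map_smul' a c := by
    simp only [Pi.smul_apply, smul_eq_mul, mul_sum, mul_assoc, RingHom.id_apply]

theorem homogEval_apply (f : Fin n → S) (K : ℕ) (c : (Fin n → ℕ) → S) :
    homogEval f K c = ∑ m ∈ Nat.antidiagonalTuple n K, c m * ∏ i, f i ^ m i := rfl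

theorem prod_pow_add_single (f : Fin n → S) (m : Fin n → ℕ) (j : Fin n) :
    ∏ i, f i ^ (m + Pi.single j 1 : Fin n → ℕ) i = (∏ i, f i ^ m i) * f j := by
  simp only [Pi.add_apply, pow_add, prod_mul_distrib]
  congr 1
  rw [prod_eq_single j (fun i _ hi => by rw [Pi.single_eq_of_ne hi, pow_zero]) (by simp)]
  simp

theorem prod_pow_mem_span_range_pow (f : Fin n → S) {K : ℕ} {m : Fin n → ℕ}
    (hm : m ∈ Nat.antidiagonalTuple n K) : ∏ i, f i ^ m i ∈ Ideal.span (Set.range f) ^ K := by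
  rw [← Nat.mem_antidiagonalTuple.mp hm, ← prod_pow_eq_pow_sum]
  exact Ideal.prod_mem_prod fun i _ =>
    Ideal.pow_mem_pow (Ideal.subset_span (Set.mem_range_self i)) _

theorem homogEval_mem_span_range_pow (f : Fin n → S) (K : ℕ) (c : (Fin n → ℕ) → S) :
    homogEval f K c ∈ Ideal.span (Set.range f) ^ K := by
  rw [homogEval_apply]
  exact sum_mem fun m hm => Ideal.mul_mem_left _ _ (prod_pow_mem_span_range_pow f hm)

theorem mul_prod_pow_mem_range_homogEval (f : Fin n → S) {K : ℕ} {m : Fin n → ℕ}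
    (hm : m ∈ Nat.antidiagonalTuple n K) (a : S) :
    a * ∏ i, f i ^ m i ∈ LinearMap.range (homogEval f K) := by
  refine ⟨Pi.single m a, ?_⟩
  rw [homogEval_apply, sum_eq_single m (fun m' _ hm' => by simp [hm']) (fun h => absurd hm h)]
  simp

theorem homogEval_mul_mem_range (f : Fin n → S) (K : ℕ) (c : (Fin n → ℕ) → S) (j : Fin n) :
    homogEval f K c * f j ∈ LinearMap.range (homogEval f (K + 1)) := by
  rw [homogEval_apply, sum_mul]
  refine sum_mem fun m hm => ?_
  rw [mul_assoc, ← prod_pow_add_single]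
  exact mul_prod_pow_mem_range_homogEval f (add_single_mem_antidiagonalTuple hm j) _

theorem range_homogEval (f : Fin n → S) (K : ℕ) :
    LinearMap.range (homogEval f K) = Ideal.span (Set.range f) ^ K := by
  refine le_antisymm (LinearMap.range_le_iff_comap.mpr ?_) ?_
  · exact eq_top_iff.mpr fun c _ => homogEval_mem_span_range_pow f K c
  induction K with
  | zero =>
    rw [pow_zero, Ideal.one_eq_top, top_le_iff, Ideal.eq_top_iff_one]
    have h0 : (0 : Fin n → ℕ) ∈ Nat.antidiagonalTuple n 0 := by simp [Nat.mem_antidiagonalTuple]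
    simpa using mul_prod_pow_mem_range_homogEval f h0 1
  | succ K ih =>
    rw [pow_succ, Ideal.mul_le]
    intro a ha b hb
    obtain ⟨c, rfl⟩ := ih ha
    refine Submodule.span_induction ?_ (by simp) (fun x y _ _ hx hy => ?_) (fun r x _ hx => ?_) hb
    · rintro _ ⟨j, rfl⟩
      exact homogEval_mul_mem_range f K c j
    · rw [mul_add]; exact add_mem hx hy
    · rw [smul_eq_mul, mul_left_comm]; exact Submodule.smul_mem _ r hx

theorem exists_homogEval_eq {f : Fin n → S} {K : ℕ} {x : S}
    (hx : x ∈ Ideal.span (Set.range f) ^ K) : ∃ c, homogEval f K c = x := by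
  rwa [← range_homogEval, LinearMap.mem_range] at hx

theorem homogEval_succ (f : Fin (n + 1) → S) (K : ℕ) (c : (Fin (n + 1) → ℕ) → S) :
    homogEval f (K + 1) c = homogEval (Fin.init f) (K + 1) (fun μ => c (Fin.snoc μ 0)) +
      f (Fin.last n) * homogEval f K (fun m => c (m + Pi.single (Fin.last n) 1)) := by
  rw [homogEval_apply, ← sum_filter_add_sum_filter_not _ (fun m => m (Fin.last n) = 0),
    homogEval_apply, homogEval_apply, mul_sum]
  congr 1
  · refine sum_nbij' Fin.init (Fin.snoc · 0) (fun m hm => ?_) (fun μ hμ => ?_) (fun m hm => ?_)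
      (fun μ _ => by simp) (fun m hm => ?_) <;> simp only [mem_filter] at *
    · exact init_mem_antidiagonalTuple hm.1 hm.2
    · exact ⟨snoc_zero_mem_antidiagonalTuple hμ, by simp⟩
    · rw [← hm.2, Fin.snoc_init_self]
    · rw [← hm.2, Fin.snoc_init_self]
      simp [Fin.prod_univ_castSucc, hm.2, Fin.init]
  · refine sum_nbij' (· - Pi.single (Fin.last n) 1) (· + Pi.single (Fin.last n) 1)
      (fun m hm => ?_) (fun m hm => ?_) (fun m hm => ?_) (fun m _ => by simp) (fun m hm => ?_)
      <;> simp only [mem_filter] at *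
    · exact sub_single_mem_antidiagonalTuple hm.1 hm.2
    · exact ⟨add_single_mem_antidiagonalTuple hm _, by simp⟩
    · exact sub_single_add_single hm.2
    · conv_lhs => rw [← sub_single_add_single hm.2]
      rw [prod_pow_add_single]
      ring

theorem RingTheory.Sequence.isWeaklyRegular_ofFn_succ_iff (f : Fin (n + 1) → S) :
    IsWeaklyRegular S (List.ofFn f) ↔ IsWeaklyRegular S (List.ofFn (Fin.init f)) ∧
      ∀ x, f (Fin.last n) * x ∈ Ideal.span (Set.range (Fin.init f)) →
        x ∈ Ideal.span (Set.range (Fin.init f)) := by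
  have hJ : Ideal.ofList (List.ofFn (Fin.init f)) = Ideal.span (Set.range (Fin.init f)) :=
    congrArg Ideal.span (Set.ext fun _ => List.mem_ofFn)
  rw [List.ofFn_succ', List.concat_eq_append, isWeaklyRegular_append_iff,
    isWeaklyRegular_singleton_iff, isSMulRegular_quotient_iff_mem_of_smul_mem]
  rw [show (fun i => f (Fin.castSucc i)) = Fin.init f from rfl, hJ, smul_eq_mul, Ideal.mul_top]
  rfl

def IsQuasiRegular (f : Fin n → S) : Prop :=
  ∀ K c, homogEval f K c ∈ Ideal.span (Set.range f) ^ (K + 1) →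
    ∀ m ∈ Nat.antidiagonalTuple n K, c m ∈ Ideal.span (Set.range f)

theorem coeff_mem_of_homogEval_zero_mem (f : Fin n → S) (c : (Fin n → ℕ) → S)
    (hc : homogEval f 0 c ∈ Ideal.span (Set.range f) ^ (0 + 1)) :
    ∀ m ∈ Nat.antidiagonalTuple n 0, c m ∈ Ideal.span (Set.range f) := by
  intro m hm
  rw [Nat.antidiagonalTuple_zero_right, mem_singleton] at hm
  subst hm
  simpa [homogEval_apply, Nat.antidiagonalTuple_zero_right] using hc

theorem isQuasiRegular_fin_zero (f : Fin 0 → S) : IsQuasiRegular f := by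
  rintro (_ | K) c hc
  · exact coeff_mem_of_homogEval_zero_mem f c hc
  · simp [Nat.antidiagonalTuple_zero_succ]

theorem IsQuasiRegular.mem_pow_of_mul_mem {f : Fin n → S} (hf : IsQuasiRegular f) {g : S}
    (hg : ∀ x, g * x ∈ Ideal.span (Set.range f) → x ∈ Ideal.span (Set.range f)) :
    ∀ (p : ℕ) {x : S}, g * x ∈ Ideal.span (Set.range f) ^ p → x ∈ Ideal.span (Set.range f) ^ p
  | 0, _, _ => by simp
  | p + 1, x, hx => by
    obtain ⟨b, rfl⟩ := exists_homogEval_eq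
      (hf.mem_pow_of_mul_mem hg p (Ideal.pow_le_pow_right p.le_succ hx))
    rw [← smul_eq_mul, ← map_smul] at hx
    rw [pow_succ', homogEval_apply]
    exact sum_mem fun m hm =>
      Ideal.mul_mem_mul (hg _ (hf p _ hx m hm)) (prod_pow_mem_span_range_pow f hm)

theorem IsQuasiRegular.of_init {f : Fin (n + 1) → S} (hinit : IsQuasiRegular (Fin.init f))
    (hlast : ∀ x, f (Fin.last n) * x ∈ Ideal.span (Set.range (Fin.init f)) →
      x ∈ Ideal.span (Set.range (Fin.init f))) :
    IsQuasiRegular f := by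
  set g := f (Fin.last n)
  set J := Ideal.span (Set.range (Fin.init f))
  set I := Ideal.span (Set.range f)
  have hJI : J ≤ I := Ideal.span_mono (Set.range_comp_subset_range _ _)
  have hgI : g ∈ I := Ideal.subset_span (Set.mem_range_self _)
  intro K
  induction K with
  | zero => exact coeff_mem_of_homogEval_zero_mem f
  | succ K ih =>
    intro c hc
    obtain ⟨d, hd⟩ := exists_homogEval_eq hc
    rw [homogEval_succ f K c, homogEval_succ f (K + 1) d] at hd
    set T := homogEval (Fin.init f) (K + 1) (fun μ => c (Fin.snoc μ 0))
    set R := homogEval f K (fun m => c (m + Pi.single (Fin.last n) 1))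
    set Y := homogEval (Fin.init f) (K + 1 + 1) (fun μ => d (Fin.snoc μ 0))
    set Z := homogEval f (K + 1) (fun m => d (m + Pi.single (Fin.last n) 1))
    have hZR : Z - R ∈ J ^ (K + 1) := hinit.mem_pow_of_mul_mem hlast (K + 1) <| by
      rw [show g * (Z - R) = T - Y by linear_combination hd]
      exact sub_mem (homogEval_mem_span_range_pow _ _ _)
        (Ideal.pow_le_pow_right (K + 1).le_succ (homogEval_mem_span_range_pow _ _ _))
    obtain ⟨w, hw⟩ := exists_homogEval_eq hZR
    have hc₀ : ∀ μ ∈ Nat.antidiagonalTuple n (K + 1), c (Fin.snoc μ 0) ∈ I := by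
      have hY : homogEval (Fin.init f) (K + 1) ((fun μ => c (Fin.snoc μ 0)) - g • w) = Y := by
        rw [map_sub, map_smul, hw, smul_eq_mul]
        linear_combination -hd
      intro μ hμ
      have := hinit _ _ (by rw [hY]; exact homogEval_mem_span_range_pow _ _ _) μ hμ
      simpa using add_mem (hJI this) (Ideal.mul_mem_right (w μ) I hgI)
    have hc₁ :
        ∀ m ∈ Nat.antidiagonalTuple (n + 1) K, c (m + Pi.single (Fin.last n) 1) ∈ I := by
      have hR : R ∈ I ^ (K + 1) := by
        rw [show R = Z - (Z - R) by ring]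
        exact sub_mem (homogEval_mem_span_range_pow _ _ _) (Ideal.pow_right_mono hJI _ hZR)
      exact ih _ hR
    intro m hm
    by_cases hm₀ : m (Fin.last n) = 0
    · simpa [← hm₀] using hc₀ _ (init_mem_antidiagonalTuple hm hm₀)
    · simpa [sub_single_add_single hm₀] using hc₁ _ (sub_single_mem_antidiagonalTuple hm hm₀)

theorem RingTheory.Sequence.IsWeaklyRegular.isQuasiRegular :
    ∀ {n : ℕ} {f : Fin n → S}, IsWeaklyRegular S (List.ofFn f) → IsQuasiRegular f
  | 0, f, _ => isQuasiRegular_fin_zero f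
  | _ + 1, f, hf =>
    have ⟨hinit, hlast⟩ := (isWeaklyRegular_ofFn_succ_iff f).mp hf
    hinit.isQuasiRegular.of_init hlast

namespace PoissonBracket

variable {k : Type*} [CommRing k] [Algebra k S] (P : PoissonBracket k S)

def bracketLeft (s : S) : S →+ S :=
  AddMonoidHom.mk' (P.bracket · s) fun a b => P.add_left a b s

theorem bracket_sub_left (a b s : S) : P.bracket (a - b) s = P.bracket a s - P.bracket b s :=
  map_sub (P.bracketLeft s) a b

theorem bracket_mul_left (a b s : S) :
    P.bracket (a * b) s = P.bracket a s * b + a * P.bracket b s := by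
  rw [P.antisymm, P.leibniz, P.antisymm s a, P.antisymm s b]
  ring

def center : Subring S where
  carrier := {a | ∀ s, P.bracket a s = 0}
  mul_mem' {a b} ha hb s := by rw [bracket_mul_left, ha s, hb s, zero_mul, mul_zero, add_zero]
  one_mem' s := by simpa using (P.bracket_mul_left 1 1 s).symm
  add_mem' {a b} ha hb s := by rw [P.add_left, ha s, hb s, add_zero]
  zero_mem' s := map_zero (P.bracketLeft s)
  neg_mem' {a} ha s := by
    change P.bracketLeft s (-a) = 0
    rw [map_neg, neg_eq_zero]
    exact ha s

theorem bracket_homogEval {f : Fin n → S} (hf : ∀ i, f i ∈ P.center) (K : ℕ)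
    (c : (Fin n → ℕ) → S) (s : S) :
    P.bracket (homogEval f K c) s = homogEval f K (fun m => P.bracket (c m) s) := by
  have hmon (m : Fin n → ℕ) : ∏ i, f i ^ m i ∈ P.center :=
    prod_mem fun i _ => pow_mem (hf i) _
  rw [homogEval_apply, homogEval_apply]
  change P.bracketLeft s _ = _
  rw [map_sum]
  refine sum_congr rfl fun m _ => ?_
  change P.bracket (c m * _) s = _
  rw [bracket_mul_left, hmon m s, mul_zero, add_zero]

theorem bracket_mem_span_range_pow {f : Fin n → S} (hf : ∀ i, f i ∈ P.center) {K : ℕ}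
    {x : S} (hx : x ∈ Ideal.span (Set.range f) ^ K) (s : S) :
    P.bracket x s ∈ Ideal.span (Set.range f) ^ K := by
  obtain ⟨c, rfl⟩ := exists_homogEval_eq hx
  rw [P.bracket_homogEval hf]
  exact homogEval_mem_span_range_pow _ _ _

end PoissonBracket

end

/-- Let `S` be a commutative Poisson algebra over a field and `f₁, …, fₙ` Poisson central
elements forming a regular sequence, generating the ideal `I`.  Then `I^k/I^(k+1)` is a
free `S/I`-module with basis the monomials `f₁^{m₁} ⋯ fₙ^{mₙ}` of total degree `k` (as a
Poisson module it decomposes as the direct sum of the corresponding copies of `S/I`), and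
for any Poisson central `h ∈ I^k`, each coefficient of its image in `I^k/I^(k+1)` with
respect to this basis is Poisson central in `S/I`. -/
theorem poisson_coefficients_central {k : Type*} [Field k]
    {S : Type*} [CommRing S] [Algebra k S]
    (P : PoissonBracket k S) (n : ℕ) (f : Fin n → S)
    (hreg : RingTheory.Sequence.IsRegular S (List.ofFn f))
    (hcent : ∀ (i : Fin n) (s : S), P.bracket (f i) s = 0) (K : ℕ) :
    -- `I^k/I^(k+1)` decomposes with basis the degree `k` monomials in the `fᵢ`:
    -- they span `I^k` modulo `I^(k+1)` …
    (∀ x ∈ (Ideal.span (Set.range f)) ^ K, ∃ c : (Fin n → ℕ) → S,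
        x - ∑ m ∈ Finset.Nat.antidiagonalTuple n K, c m * ∏ i, f i ^ m i ∈
          (Ideal.span (Set.range f)) ^ (K + 1)) ∧
    -- … and are linearly independent over `S/I`
    (∀ c : (Fin n → ℕ) → S,
        (∑ m ∈ Finset.Nat.antidiagonalTuple n K, c m * ∏ i, f i ^ m i) ∈
            (Ideal.span (Set.range f)) ^ (K + 1) →
        ∀ m ∈ Finset.Nat.antidiagonalTuple n K, c m ∈ Ideal.span (Set.range f)) ∧
    -- coefficients of a Poisson central element of `I^K` are Poisson central in `S/I`
    (∀ h ∈ (Ideal.span (Set.range f)) ^ K, (∀ s : S, P.bracket h s = 0) →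
      ∀ c : (Fin n → ℕ) → S,
        h - ∑ m ∈ Finset.Nat.antidiagonalTuple n K, c m * ∏ i, f i ^ m i ∈
            (Ideal.span (Set.range f)) ^ (K + 1) →
        ∀ m ∈ Finset.Nat.antidiagonalTuple n K, ∀ s : S,
          P.bracket (c m) s ∈ Ideal.span (Set.range f)) := by
  have hquasi : IsQuasiRegular f := hreg.toIsWeaklyRegular.isQuasiRegular
  refine ⟨fun x hx => ?_, hquasi K, fun h _ hh c hc m hm s =>
    hquasi K (fun m => P.bracket (c m) s) ?_ m hm⟩
  · obtain ⟨c, rfl⟩ := exists_homogEval_eq hx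
    exact ⟨c, by rw [homogEval_apply, sub_self]; exact zero_mem _⟩
  · change h - homogEval f K c ∈ _ at hc
    have := P.bracket_mem_span_range_pow hcent hc s
    rwa [P.bracket_sub_left, hh, zero_sub, neg_mem_iff, P.bracket_homogEval hcent] at this
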